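/- arXiv:1807.04501 — 3 statements merged into one kernel-verified Lean document; each statement's English description precedes it below -/
import Mathlib

section
/- Representation of ω-bounded functionals on a reflexive space: let E be a real reflexive Banach space (the canonical inclusion of E into its double dual is surjective) and let ω be a continuous alternating bilinear form on E which is weakly nondegenerate (ω(u,v) = 0 for all v ∈ E implies u = 0). Let φ : E → ℝ be a linear functional for which there exists C ≥ 0 with |φ(v)| ≤ C·‖ω^♭(v)‖_{E*} for all v ∈ E. Then there exists a unique u ∈ E such that φ(v) = ω(u,v) for all v ∈ E, and moreover ‖u‖ ≤ C. -/
/-!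
On the range of `ω^♭ : E → E*` the functional `ω^♭ v ↦ φ v` is well defined (by the bound, `φ`
vanishes on the kernel of `ω^♭`) and has norm at most `C`. Hahn–Banach extends it to an element
of `E**` of norm at most `C`, which by reflexivity is evaluation at some `u₀` with `‖u₀‖ ≤ C`.
Thus `φ v = ω v u₀ = ω (-u₀) v` by antisymmetry, and weak nondegeneracy gives uniqueness.
-/

namespace LinearMap

theorem exists_apply_mem_range_eq_of_ker_le {R M M₂ N : Type*} [Ring R] [AddCommGroup M]
    [Module R M] [AddCommGroup M₂] [Module R M₂] [AddCommGroup N] [Module R N]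
    (f : M →ₗ[R] M₂) (g : M →ₗ[R] N) (h : ker f ≤ ker g) :
    ∃ g' : range f →ₗ[R] N, ∀ x, g' ⟨f x, mem_range_self f x⟩ = g x :=
  ⟨(ker f).liftQ g h ∘ₗ f.quotKerEquivRange.symm.toLinearMap, fun x => by simp⟩

theorem exists_dual_comp_eq_of_abs_le_mul_norm {E F : Type*} [AddCommGroup E]
    [Module ℝ E] [SeminormedAddCommGroup F] [NormedSpace ℝ F] (T : E →ₗ[ℝ] F) (φ : E →ₗ[ℝ] ℝ)
    {C : ℝ} (hC : 0 ≤ C) (hφ : ∀ v, |φ v| ≤ C * ‖T v‖) :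
    ∃ Ψ : F →L[ℝ] ℝ, (∀ v, Ψ (T v) = φ v) ∧ ‖Ψ‖ ≤ C := by
  have hker : ker T ≤ ker φ := fun v hv => by
    simpa [mem_ker.mp hv] using hφ v
  obtain ⟨g, hg⟩ := T.exists_apply_mem_range_eq_of_ker_le φ hker
  have hgC : ∀ x, ‖g x‖ ≤ C * ‖x‖ := by
    rintro ⟨_, v, rfl⟩
    simpa [hg] using hφ v
  obtain ⟨Ψ, hΨ, hΨnorm⟩ := exists_extension_norm_eq _ (g.mkContinuous C hgC)
  refine ⟨Ψ, fun v => ?_, hΨnorm ▸ g.mkContinuous_norm_le hC hgC⟩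
  simpa [hg] using hΨ ⟨T v, mem_range_self T v⟩

end LinearMap

theorem exists_unique_rep_of_omega_bounded_general
    {E : Type*} [NormedAddCommGroup E] [NormedSpace ℝ E]
    (hrefl : Function.Surjective (NormedSpace.inclusionInDoubleDual ℝ E))
    (ω : E →L[ℝ] E →L[ℝ] ℝ)
    (halt : ∀ u v : E, ω u v = - ω v u)
    (hnd : ∀ u : E, (∀ v : E, ω u v = 0) → u = 0)
    (φ : E →ₗ[ℝ] ℝ) (C : ℝ) (hC : 0 ≤ C)
    (hφ : ∀ v : E, |φ v| ≤ C * ‖ω v‖) :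
    ∃ u : E, (∀ v : E, φ v = ω u v) ∧ ‖u‖ ≤ C ∧
      ∀ u' : E, (∀ v : E, φ v = ω u' v) → u' = u := by
  obtain ⟨Ψ, hΨ, hΨC⟩ :=
    (ω : E →ₗ[ℝ] E →L[ℝ] ℝ).exists_dual_comp_eq_of_abs_le_mul_norm φ hC hφ
  obtain ⟨u₀, rfl⟩ := hrefl Ψ
  have hrep : ∀ v, φ v = ω (-u₀) v := fun v => by
    rw [← hΨ v, map_neg, neg_apply, halt, neg_neg]
    rfl
  refine ⟨-u₀, hrep, ?_, fun u' hu' => ?_⟩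
  · rwa [norm_neg, ← (NormedSpace.inclusionInDoubleDualLi ℝ).norm_map u₀]
  · refine sub_eq_zero.mp (hnd _ fun v => ?_)
    rw [map_sub, sub_apply, ← hu', hrep, sub_self]

/-- Representation of ω-bounded functionals on a reflexive space.
`E` is a real reflexive Banach space, `ω` a continuous alternating weakly nondegenerate
bilinear form on `E`, and `φ` a linear functional with `|φ v| ≤ C * ‖ω^♭ v‖` for all `v`
(where `ω^♭ v = ω v ∈ E*`).  Then there is a unique `u ∈ E` with `φ v = ω u v` for all
`v`, and moreover `‖u‖ ≤ C`. -/
theorem exists_unique_rep_of_omega_bounded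
    {E : Type*} [NormedAddCommGroup E] [NormedSpace ℝ E] [CompleteSpace E]
    (hrefl : Function.Surjective (NormedSpace.inclusionInDoubleDual ℝ E))
    (ω : E →L[ℝ] E →L[ℝ] ℝ)
    (halt : ∀ u v : E, ω u v = - ω v u)
    (hnd : ∀ u : E, (∀ v : E, ω u v = 0) → u = 0)
    (φ : E →ₗ[ℝ] ℝ) (C : ℝ) (hC : 0 ≤ C)
    (hφ : ∀ v : E, |φ v| ≤ C * ‖ω v‖) :
    ∃ u : E, (∀ v : E, φ v = ω u v) ∧ ‖u‖ ≤ C ∧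
      ∀ u' : E, (∀ v : E, φ v = ω u' v) → u' = u :=
  exists_unique_rep_of_omega_bounded_general hrefl ω halt hnd φ C hC hφ
end

section
/- Existence and uniqueness of solutions for a direct limit of ODEs: let E be a real vector space, (p_n)_{n∈ℕ} a monotone increasing sequence of subspaces with union E, carrying a coherent sequence of norms whose common extension makes E a normed space N, and assume each subspace p_n is complete for the induced norm. Fix t₀ ∈ ℝ, T > 0, I = [t₀ − T, t₀ + T], n₀ ∈ ℕ and a ∈ p_{n₀}. For n ≥ n₀ let U_n ⊆ p_n be open subsets with U_n ⊆ U_{n+1}, and let f_n : I × U_n → p_n be continuous maps with f_{n+1}|_{I×U_n} = f_n. Assume: (Aₙ) for each n ≥ n₀ there is K_n > 0 such that ‖f_n(t,x)‖ ≤ K_n for all (t,x) ∈ I × U_n and x ↦ f_n(t,x) is Lipschitz with constant K_n on U_n for every t ∈ I; there are radii r_n > 0 with the closed ball {x ∈ p_n : ‖x − a‖ ≤ r_n} contained in U_n; (B) inf_{n≥n₀} r_n/K_n > 0, and τ is chosen with 0 < τ < min(inf_n r_n/K_n, T); (C) inf_{n≥n₀} (r_n − τK_n) > 0. Then for every x belonging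 to some V_m := {y ∈ p_m : ‖y − a‖ < min(r_m − τK_m, r_{n₀} − τK_{n₀})} (m ≥ n₀), there exists a curve γ : [t₀ − τ, t₀ + τ] → E with γ(t₀) = x, taking values in U_m ⊆ p_m, differentiable with derivative γ′(t) = f_m(t, γ(t)) for all t; and γ is unique among curves δ : [t₀ − τ, t₀ + τ] → E with δ(t₀) = x whose image is contained in U_k for some k ≥ n₀ and which satisfy δ′(t) = f_k(t, δ(t)) for all t. -/
/-!
As long as a curve stays in `U m`, the whole problem lives in the complete subspace `p m`, so
existence is the Picard–Lindelöf theorem in `p m` for the field `f m`, cut off to `0` outside the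
ball of radius `τ K_m` around `x`. The cut-off field is bounded by `K_m`, so in time `τ` the
solution moves by at most `τ K_m` and never leaves the ball, where the cut-off is invisible; the
ball lies in `U m` because `‖x - a‖ + τ K_m < r_m`. For uniqueness, a competing solution with
values in `U k` and the one constructed both solve the Lipschitz field `f j` on `U j` for
`j = max m k`, by coherence, and solutions of a Lipschitz ODE are unique.
-/

open Set Metric
open scoped NNReal

section SubmodulePicardLindelof

variable {E : Type*} [NormedAddCommGroup E] [NormedSpace ℝ E]

open scoped Classical in
noncomputable def truncatedField (S : Submodule ℝ E) (f : ℝ → E → E) (x : E) (a : ℝ)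
    (t : ℝ) (y : S) : S :=
  if h : (y : E) ∈ closedBall x a ∧ f t y ∈ S then ⟨f t y, h.2⟩ else 0

variable {S : Submodule ℝ E} {f : ℝ → E → E} {x : E}

lemma coe_truncatedField {a t : ℝ} {y : S} (hy : (y : E) ∈ closedBall x a) (hf : f t y ∈ S) :
    (truncatedField S f x a t y : E) = f t y := by
  simp [truncatedField, hy, hf]

lemma norm_truncatedField_le {a t : ℝ} {L : ℝ≥0}
    (hnorm : ∀ y ∈ (S : Set E) ∩ closedBall x a, ‖f t y‖ ≤ L) (y : S) :
    ‖truncatedField S f x a t y‖ ≤ L := by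
  unfold truncatedField
  split_ifs with h
  · exact hnorm y ⟨y.2, h.1⟩
  · simp

lemma isPicardLindelof_truncatedField {tmin tmax : ℝ} (t₀ : Icc tmin tmax) (hx : x ∈ S)
    {a L K : ℝ≥0}
    (hmem : ∀ t ∈ Icc tmin tmax, ∀ y ∈ (S : Set E) ∩ closedBall x a, f t y ∈ S)
    (hlip : ∀ t ∈ Icc tmin tmax, LipschitzOnWith K (f t) ((S : Set E) ∩ closedBall x a))
    (hcont : ∀ y ∈ (S : Set E) ∩ closedBall x a, ContinuousOn (f · y) (Icc tmin tmax))
    (hnorm : ∀ t ∈ Icc tmin tmax, ∀ y ∈ (S : Set E) ∩ closedBall x a, ‖f t y‖ ≤ L)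
    (hle : L * max (tmax - t₀) (t₀ - tmin) ≤ a) :
    IsPicardLindelof (truncatedField S f x a) t₀ ⟨x, hx⟩ a 0 L K where
  lipschitzOnWith t ht := by
    refine LipschitzOnWith.of_dist_le_mul fun y hy z hz ↦ ?_
    rw [Subtype.dist_eq, Subtype.dist_eq, coe_truncatedField hy (hmem t ht y ⟨y.2, hy⟩),
      coe_truncatedField hz (hmem t ht z ⟨z.2, hz⟩)]
    exact (hlip t ht).dist_le_mul y ⟨y.2, hy⟩ z ⟨z.2, hz⟩
  continuousOn y hy := by
    rw [Topology.IsEmbedding.subtypeVal.continuousOn_iff]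
    refine (hcont y ⟨y.2, hy⟩).congr fun t ht ↦ ?_
    exact coe_truncatedField hy (hmem t ht y ⟨y.2, hy⟩)
  norm_le t ht y _ := norm_truncatedField_le (hnorm t ht) y
  mul_max_le := by simpa using hle

theorem exists_forall_mem_Icc_hasDerivWithinAt_of_isComplete (hS : IsComplete (S : Set E))
    {tmin tmax t₀ : ℝ} (ht₀ : t₀ ∈ Icc tmin tmax) (hx : x ∈ S) {a L K : ℝ≥0}
    (hmem : ∀ t ∈ Icc tmin tmax, ∀ y ∈ (S : Set E) ∩ closedBall x a, f t y ∈ S)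
    (hlip : ∀ t ∈ Icc tmin tmax, LipschitzOnWith K (f t) ((S : Set E) ∩ closedBall x a))
    (hcont : ∀ y ∈ (S : Set E) ∩ closedBall x a, ContinuousOn (f · y) (Icc tmin tmax))
    (hnorm : ∀ t ∈ Icc tmin tmax, ∀ y ∈ (S : Set E) ∩ closedBall x a, ‖f t y‖ ≤ L)
    (hle : L * max (tmax - t₀) (t₀ - tmin) ≤ a) :
    ∃ γ : ℝ → E, γ t₀ = x ∧ ∀ t ∈ Icc tmin tmax,
      γ t ∈ (S : Set E) ∩ closedBall x a ∧ HasDerivWithinAt γ (f t (γ t)) (Icc tmin tmax) t := by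
  have := hS.completeSpace_coe
  obtain ⟨g, hg₀, hg⟩ := (isPicardLindelof_truncatedField ⟨t₀, ht₀⟩ hx hmem hlip hcont hnorm
    hle).exists_eq_forall_mem_Icc_hasDerivWithinAt₀
  have hball (t) (ht : t ∈ Icc tmin tmax) : (g t : E) ∈ closedBall x a := by
    have hmv := (convex_Icc tmin tmax).norm_image_sub_le_of_norm_hasDerivWithin_le hg
      (fun s hs ↦ norm_truncatedField_le (hnorm s hs) _) ht₀ ht
    have hdist : ‖t - t₀‖ ≤ max (tmax - t₀) (t₀ - tmin) := by
      rw [Real.norm_eq_abs, abs_sub_le_iff]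
      constructor
      · exact le_max_of_le_left (by linarith [ht.2])
      · exact le_max_of_le_right (by linarith [ht.1])
    rw [mem_closedBall, ← show (g t₀ : E) = x from congrArg Subtype.val hg₀, ← Subtype.dist_eq,
      dist_eq_norm]
    calc ‖g t - g t₀‖ ≤ L * ‖t - t₀‖ := hmv
      _ ≤ L * max (tmax - t₀) (t₀ - tmin) := by gcongr
      _ ≤ a := hle
  refine ⟨fun t ↦ g t, congrArg Subtype.val hg₀, fun t ht ↦ ⟨⟨(g t).2, hball t ht⟩, ?_⟩⟩
  have hγ := S.subtypeL.hasFDerivAt.comp_hasDerivWithinAt t (hg t ht)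
  rwa [S.subtypeL_apply, coe_truncatedField (hball t ht) (hmem t ht _ ⟨(g t).2, hball t ht⟩)]
    at hγ

theorem exists_forall_mem_Icc_mem_hasDerivWithinAt_of_isComplete (hS : IsComplete (S : Set E))
    (hx : x ∈ S) {V : Set E} {t₀ T τ K : ℝ} (hτ : 0 ≤ τ) (hτT : τ ≤ T) (hK : 0 ≤ K)
    (hV : (S : Set E) ∩ closedBall x (τ * K) ⊆ V)
    (hmem : ∀ t ∈ Icc (t₀ - T) (t₀ + T), ∀ y ∈ V, f t y ∈ S)
    (hcont : ContinuousOn (fun q : ℝ × E ↦ f q.1 q.2) (Icc (t₀ - T) (t₀ + T) ×ˢ V))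
    (hbound : ∀ t ∈ Icc (t₀ - T) (t₀ + T), ∀ y ∈ V, ‖f t y‖ ≤ K)
    (hlip : ∀ t ∈ Icc (t₀ - T) (t₀ + T), ∀ y ∈ V, ∀ z ∈ V, ‖f t y - f t z‖ ≤ K * ‖y - z‖) :
    ∃ γ : ℝ → E, γ t₀ = x ∧ ∀ t ∈ Icc (t₀ - τ) (t₀ + τ),
      γ t ∈ V ∧ HasDerivWithinAt γ (f t (γ t)) (Icc (t₀ - τ) (t₀ + τ)) t := by
  have hI : Icc (t₀ - τ) (t₀ + τ) ⊆ Icc (t₀ - T) (t₀ + T) :=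
    Icc_subset_Icc (by linarith) (by linarith)
  obtain ⟨γ, hγ₀, hγ⟩ := exists_forall_mem_Icc_hasDerivWithinAt_of_isComplete hS
    ⟨by linarith, by linarith⟩ hx (a := ⟨τ * K, by positivity⟩) (L := ⟨K, hK⟩)
    (fun t ht y hy ↦ hmem t (hI ht) y (hV hy))
    (fun t ht ↦ (LipschitzOnWith.of_dist_le' fun y hy z hz ↦ by
      simpa only [dist_eq_norm] using hlip t (hI ht) y hy z hz).mono hV)
    (fun y hy ↦ hcont.comp (Continuous.prodMk_left y).continuousOn fun t ht ↦ ⟨hI ht, hV hy⟩)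
    (fun t ht y hy ↦ hbound t (hI ht) y (hV hy))
    (show K * max (t₀ + τ - t₀) (t₀ - (t₀ - τ)) ≤ τ * K by simp [mul_comm])
  exact ⟨γ, hγ₀, fun t ht ↦ ⟨hV (hγ t ht).1, (hγ t ht).2⟩⟩

end SubmodulePicardLindelof

theorem ODE_solution_unique_of_mem_Icc_of_hasDerivWithinAt {E : Type*} [NormedAddCommGroup E]
    [NormedSpace ℝ E] {v : ℝ → E → E} {s : ℝ → Set E} {K : ℝ≥0} {f g : ℝ → E} {a b t₀ : ℝ}
    (hv : ∀ t ∈ Ioo a b, LipschitzOnWith K (v t) (s t)) (ht : t₀ ∈ Ioo a b)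
    (hf : ∀ t ∈ Icc a b, HasDerivWithinAt f (v t (f t)) (Icc a b) t)
    (hfs : ∀ t ∈ Ioo a b, f t ∈ s t)
    (hg : ∀ t ∈ Icc a b, HasDerivWithinAt g (v t (g t)) (Icc a b) t)
    (hgs : ∀ t ∈ Ioo a b, g t ∈ s t) (heq : f t₀ = g t₀) :
    EqOn f g (Icc a b) :=
  ODE_solution_unique_of_mem_Icc hv ht (fun t ht ↦ (hf t ht).continuousWithinAt)
    (fun t ht ↦ (hf t (Ioo_subset_Icc_self ht)).hasDerivAt (Icc_mem_nhds ht.1 ht.2)) hfs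
    (fun t ht ↦ (hg t ht).continuousWithinAt)
    (fun t ht ↦ (hg t (Ioo_subset_Icc_self ht)).hasDerivAt (Icc_mem_nhds ht.1 ht.2)) hgs heq

section DirectLimit

variable {n₀ : ℕ}

theorem eq_of_le_of_forall_succ_eq {α ι β : Type*} {U : ℕ → Set α}
    (hU : ∀ n, n₀ ≤ n → U n ⊆ U (n + 1)) {s : Set ι} {F : ℕ → ι → α → β}
    (hF : ∀ n, n₀ ≤ n → ∀ t ∈ s, ∀ y ∈ U n, F (n + 1) t y = F n t y)
    {n j : ℕ} (hn : n₀ ≤ n) (hnj : n ≤ j) : ∀ t ∈ s, ∀ y ∈ U n, F j t y = F n t y := by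
  induction j, hnj using Nat.le_induction with
  | base => exact fun _ _ _ _ ↦ rfl
  | succ j hj ih =>
    intro t ht y hy
    rw [hF j (hn.trans hj) t ht y (monotoneOn_nat_Ici_of_le_succ hU hn (hn.trans hj) hj hy),
      ih t ht y hy]

theorem forall_mem_hasDerivWithinAt_of_le {E : Type*} [NormedAddCommGroup E] [NormedSpace ℝ E]
    {U : ℕ → Set E} (hU : ∀ n, n₀ ≤ n → U n ⊆ U (n + 1)) {s J : Set ℝ} (hJ : J ⊆ s)
    {f : ℕ → ℝ → E → E} (hf : ∀ n, n₀ ≤ n → ∀ t ∈ s, ∀ y ∈ U n, f (n + 1) t y = f n t y)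
    {n j : ℕ} (hn : n₀ ≤ n) (hnj : n ≤ j) {γ : ℝ → E}
    (hγ : ∀ t ∈ J, γ t ∈ U n ∧ HasDerivWithinAt γ (f n t (γ t)) J t) :
    ∀ t ∈ J, γ t ∈ U j ∧ HasDerivWithinAt γ (f j t (γ t)) J t := by
  intro t ht
  obtain ⟨hγU, hγd⟩ := hγ t ht
  refine ⟨monotoneOn_nat_Ici_of_le_succ hU hn (hn.trans hnj) hnj hγU, ?_⟩
  rwa [eq_of_le_of_forall_succ_eq hU hf hn hnj t (hJ ht) _ hγU]

end DirectLimit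

theorem direct_limit_ode_existence_uniqueness_general
    {E : Type*} [NormedAddCommGroup E] [NormedSpace ℝ E]
    (p : ℕ → Submodule ℝ E)
    (hcomplete : ∀ n, IsComplete (p n : Set E))
    (t₀ T : ℝ) (n₀ : ℕ) (a : E)
    (U : ℕ → Set E)
    (hUmono : ∀ n, n₀ ≤ n → U n ⊆ U (n + 1))
    (f : ℕ → ℝ → E → E)
    (hfmem : ∀ n, n₀ ≤ n → ∀ t ∈ Set.Icc (t₀ - T) (t₀ + T), ∀ x ∈ U n, f n t x ∈ p n)
    (hfcont : ∀ n, n₀ ≤ n →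
      ContinuousOn (fun q : ℝ × E => f n q.1 q.2) (Set.Icc (t₀ - T) (t₀ + T) ×ˢ U n))
    (hfcoh : ∀ n, n₀ ≤ n → ∀ t ∈ Set.Icc (t₀ - T) (t₀ + T), ∀ x ∈ U n,
      f (n + 1) t x = f n t x)
    (K : ℕ → ℝ) (hK : ∀ n, n₀ ≤ n → 0 < K n)
    (hbound : ∀ n, n₀ ≤ n → ∀ t ∈ Set.Icc (t₀ - T) (t₀ + T), ∀ x ∈ U n, ‖f n t x‖ ≤ K n)
    (hlip : ∀ n, n₀ ≤ n → ∀ t ∈ Set.Icc (t₀ - T) (t₀ + T), ∀ x ∈ U n, ∀ y ∈ U n,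
      ‖f n t x - f n t y‖ ≤ K n * ‖x - y‖)
    (r : ℕ → ℝ)
    (hball : ∀ n, n₀ ≤ n → ∀ x ∈ p n, ‖x - a‖ ≤ r n → x ∈ U n)
    (τ : ℝ) (hτpos : 0 < τ) (hτT : τ < T) :
    ∀ m, n₀ ≤ m → ∀ x ∈ p m,
      ‖x - a‖ < min (r m - τ * K m) (r n₀ - τ * K n₀) →
      ∃ γ : ℝ → E, γ t₀ = x ∧
        (∀ t ∈ Set.Icc (t₀ - τ) (t₀ + τ), γ t ∈ U m) ∧
        (∀ t ∈ Set.Icc (t₀ - τ) (t₀ + τ),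
          HasDerivWithinAt γ (f m t (γ t)) (Set.Icc (t₀ - τ) (t₀ + τ)) t) ∧
        ∀ δc : ℝ → E, δc t₀ = x →
          (∃ k, n₀ ≤ k ∧ (∀ t ∈ Set.Icc (t₀ - τ) (t₀ + τ), δc t ∈ U k) ∧
            ∀ t ∈ Set.Icc (t₀ - τ) (t₀ + τ),
              HasDerivWithinAt δc (f k t (δc t)) (Set.Icc (t₀ - τ) (t₀ + τ)) t) →
          ∀ t ∈ Set.Icc (t₀ - τ) (t₀ + τ), δc t = γ t := by
  intro m hm x hxp hxa
  have hI : Icc (t₀ - τ) (t₀ + τ) ⊆ Icc (t₀ - T) (t₀ + T) :=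
    Icc_subset_Icc (by linarith) (by linarith)
  have hballU : (p m : Set E) ∩ closedBall x (τ * K m) ⊆ U m := by
    rintro y ⟨hyp, hy⟩
    have hxa' : τ * K m + dist x a ≤ r m := by
      rw [dist_eq_norm]; linarith [min_le_left (r m - τ * K m) (r n₀ - τ * K n₀)]
    exact hball m hm y hyp (mem_closedBall_iff_norm.1 (closedBall_subset_closedBall' hxa' hy))
  obtain ⟨γ, hγ₀, hγ⟩ := exists_forall_mem_Icc_mem_hasDerivWithinAt_of_isComplete (hcomplete m)
    hxp hτpos.le hτT.le (hK m hm).le hballU (hfmem m hm) (hfcont m hm) (hbound m hm) (hlip m hm)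
  refine ⟨γ, hγ₀, fun t ht ↦ (hγ t ht).1, fun t ht ↦ (hγ t ht).2, ?_⟩
  rintro δ hδ₀ ⟨k, hk, hδU, hδ⟩
  obtain ⟨j, hmj, hkj⟩ : ∃ j, m ≤ j ∧ k ≤ j := ⟨max m k, le_max_left m k, le_max_right m k⟩
  have hγj := forall_mem_hasDerivWithinAt_of_le hUmono hI hfcoh hm hmj hγ
  have hδj := forall_mem_hasDerivWithinAt_of_le hUmono hI hfcoh hk hkj fun t ht ↦
    ⟨hδU t ht, hδ t ht⟩
  have hlipj (t) (ht : t ∈ Ioo (t₀ - τ) (t₀ + τ)) : LipschitzOnWith (K j).toNNReal (f j t) (U j) :=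
    .of_dist_le' fun y hy z hz ↦ by
      simpa only [dist_eq_norm] using
        hlip j (hm.trans hmj) t (hI (Ioo_subset_Icc_self ht)) y hy z hz
  exact ODE_solution_unique_of_mem_Icc_of_hasDerivWithinAt hlipj ⟨by linarith, by linarith⟩
    (fun t ht ↦ (hδj t ht).2) (fun t ht ↦ (hδj t (Ioo_subset_Icc_self ht)).1)
    (fun t ht ↦ (hγj t ht).2) (fun t ht ↦ (hγj t (Ioo_subset_Icc_self ht)).1) (hδ₀.trans hγ₀.symm)

/-- Existence and uniqueness of solutions for a direct limit of ODEs
(Theorem "existsol" of the paper).  `E` is a normed real vector space whose norm is the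
common extension of a coherent sequence of norms on a monotone sequence of subspaces
`p n` with union `E`, each `p n` complete for the induced norm.  Given `t₀`, `T > 0`,
`I = [t₀ − T, t₀ + T]`, `n₀`, `a ∈ p n₀`, ascending open sets `U n ⊆ p n` (`n ≥ n₀`),
coherent continuous maps `f n : I × U n → p n`, bounds and Lipschitz constants `K n`
(hypotheses (Aₙ)), radii `r n` with the closed ball of radius `r n` around `a` in `p n`
contained in `U n`, a time `τ` with `0 < τ < min (inf_n (r n / K n), T)` (hypothesis (B))
and `inf_n (r n − τ K n) > 0` (hypothesis (C)), then for every `x` in some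
`V m = {y ∈ p m : ‖y − a‖ < min (r m − τ K m, r n₀ − τ K n₀)}` there is a solution
`γ : [t₀ − τ, t₀ + τ] → U m ⊆ p m` of `γ' = f m (t, γ t)` with `γ t₀ = x`, unique among
solutions with values in some `U k`. -/
theorem direct_limit_ode_existence_uniqueness
    {E : Type*} [NormedAddCommGroup E] [NormedSpace ℝ E]
    (p : ℕ → Submodule ℝ E) (hmono : Monotone p) (hunion : ∀ x : E, ∃ n, x ∈ p n)
    (hcomplete : ∀ n, IsComplete (p n : Set E))
    (t₀ T : ℝ) (hT : 0 < T) (n₀ : ℕ) (a : E) (ha : a ∈ p n₀)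
    (U : ℕ → Set E)
    (hUsub : ∀ n, n₀ ≤ n → U n ⊆ (p n : Set E))
    (hUopen : ∀ n, n₀ ≤ n → ∀ x ∈ U n, ∃ ε > 0, ∀ y ∈ p n, ‖y - x‖ < ε → y ∈ U n)
    (hUmono : ∀ n, n₀ ≤ n → U n ⊆ U (n + 1))
    (f : ℕ → ℝ → E → E)
    (hfmem : ∀ n, n₀ ≤ n → ∀ t ∈ Set.Icc (t₀ - T) (t₀ + T), ∀ x ∈ U n, f n t x ∈ p n)
    (hfcont : ∀ n, n₀ ≤ n →
      ContinuousOn (fun q : ℝ × E => f n q.1 q.2) (Set.Icc (t₀ - T) (t₀ + T) ×ˢ U n))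
    (hfcoh : ∀ n, n₀ ≤ n → ∀ t ∈ Set.Icc (t₀ - T) (t₀ + T), ∀ x ∈ U n,
      f (n + 1) t x = f n t x)
    (K : ℕ → ℝ) (hK : ∀ n, n₀ ≤ n → 0 < K n)
    (hbound : ∀ n, n₀ ≤ n → ∀ t ∈ Set.Icc (t₀ - T) (t₀ + T), ∀ x ∈ U n, ‖f n t x‖ ≤ K n)
    (hlip : ∀ n, n₀ ≤ n → ∀ t ∈ Set.Icc (t₀ - T) (t₀ + T), ∀ x ∈ U n, ∀ y ∈ U n,
      ‖f n t x - f n t y‖ ≤ K n * ‖x - y‖)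
    (r : ℕ → ℝ) (hr : ∀ n, n₀ ≤ n → 0 < r n)
    (hball : ∀ n, n₀ ≤ n → ∀ x ∈ p n, ‖x - a‖ ≤ r n → x ∈ U n)
    (τ : ℝ) (hτpos : 0 < τ) (hτT : τ < T)
    (hB : ∃ c : ℝ, τ < c ∧ ∀ n, n₀ ≤ n → c ≤ r n / K n)
    (hC : ∃ δ : ℝ, 0 < δ ∧ ∀ n, n₀ ≤ n → δ ≤ r n - τ * K n) :
    ∀ m, n₀ ≤ m → ∀ x ∈ p m,
      ‖x - a‖ < min (r m - τ * K m) (r n₀ - τ * K n₀) →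
      ∃ γ : ℝ → E, γ t₀ = x ∧
        (∀ t ∈ Set.Icc (t₀ - τ) (t₀ + τ), γ t ∈ U m) ∧
        (∀ t ∈ Set.Icc (t₀ - τ) (t₀ + τ),
          HasDerivWithinAt γ (f m t (γ t)) (Set.Icc (t₀ - τ) (t₀ + τ)) t) ∧
        ∀ δc : ℝ → E, δc t₀ = x →
          (∃ k, n₀ ≤ k ∧ (∀ t ∈ Set.Icc (t₀ - τ) (t₀ + τ), δc t ∈ U k) ∧
            ∀ t ∈ Set.Icc (t₀ - τ) (t₀ + τ),
              HasDerivWithinAt δc (f k t (δc t)) (Set.Icc (t₀ - τ) (t₀ + τ)) t) →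
          ∀ t ∈ Set.Icc (t₀ - τ) (t₀ + τ), δc t = γ t :=
  direct_limit_ode_existence_uniqueness_general p hcomplete t₀ T n₀ a U hUmono f hfmem hfcont hfcoh
    K hK hbound hlip r hball τ hτpos hτT
end

section
/- The loop-space pairing on L^p is a weakly nondegenerate form for p ≥ 2: let d ∈ ℕ, let ω₀ be a nondegenerate alternating bilinear form on ℝ^d, let S¹ denote the additive circle ℝ/ℤ with its Haar (Lebesgue) probability measure, let 2 ≤ p < ∞ and H = L^p(S¹, ℝ^d). Then for all X, Y ∈ H the function t ↦ ω₀(X(t), Y(t)) is integrable, Ω(X,Y) := ∫_{S¹} ω₀(X(t), Y(t)) dt defines a continuous bilinear form on H (with |Ω(X,Y)| ≤ C‖X‖_p‖Y‖_p for some constant C depending only on ω₀), Ω is alternating, and Ω is weakly nondegenerate: if X ∈ H satisfies Ω(X,Y) = 0 for all Y ∈ H, then X = 0. -/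
/-!
For `2 ≤ p` and a finite measure, `L^p` embeds continuously into `L²`, so `Ω` is the
Cauchy–Schwarz-bounded `L²` pairing `∫ ω₀(X t, Y t) dt` precomposed with this embedding.
If `Ω(X, ·) = 0`, testing against the functions `𝟙_s • v` shows that the dual-valued
function `t ↦ ω₀(X t, ·)` has zero integral over every measurable set, hence vanishes a.e.,
and pointwise nondegeneracy of `ω₀` gives `X = 0`.
-/

open MeasureTheory ENNReal

/-- The loop-space pairing `Ω(X,Y) = ∫_{S¹} ω₀(X t, Y t) dt` on `L^p(S¹, ℝ^d)`,
where `S¹ = ℝ/ℤ` carries its Haar (Lebesgue) probability measure. -/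
noncomputable def loopPairingLp (d : ℕ) (q : ℝ≥0∞)
    (ω₀ : EuclideanSpace ℝ (Fin d) →ₗ[ℝ] EuclideanSpace ℝ (Fin d) →ₗ[ℝ] ℝ)
    (X Y : Lp (EuclideanSpace ℝ (Fin d)) q (volume : Measure (AddCircle (1:ℝ)))) : ℝ :=
  ∫ t, ω₀ (X t) (Y t)

namespace MeasureTheory.Lp

variable {α 𝕜 E : Type*} [MeasurableSpace α] {μ : Measure α} [IsFiniteMeasure μ]
  [NormedField 𝕜] [NormedAddCommGroup E] [NormedSpace 𝕜 E]
  {p q : ℝ≥0∞} [Fact (1 ≤ p)] [Fact (1 ≤ q)]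

theorem norm_toLp_le_of_exponent_le (hpq : p ≤ q) (f : Lp E q μ) :
    ‖((Lp.memLp f).mono_exponent hpq).toLp f‖ ≤
      (μ Set.univ ^ (1 / p.toReal - 1 / q.toReal)).toReal * ‖f‖ := by
  have hexp : 0 ≤ 1 / p.toReal - 1 / q.toReal := by
    rcases eq_or_ne q ⊤ with rfl | hq
    · simp
    have hp : 0 < p.toReal :=
      ENNReal.toReal_pos (zero_lt_one.trans_le Fact.out).ne' (ne_top_of_le_ne_top hq hpq)
    exact sub_nonneg.2 (one_div_le_one_div_of_le hp (ENNReal.toReal_mono hq hpq))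
  rw [Lp.norm_toLp, Lp.norm_def, mul_comm, ← ENNReal.toReal_mul]
  refine ENNReal.toReal_mono ?_
    (eLpNorm_le_eLpNorm_mul_rpow_measure_univ hpq (Lp.aestronglyMeasurable f))
  exact ENNReal.mul_ne_top (Lp.eLpNorm_ne_top f)
    (ENNReal.rpow_ne_top_of_nonneg hexp (measure_ne_top μ _))

variable (𝕜 E μ) in
noncomputable def inclusionOfExponentLE (hpq : p ≤ q) : Lp E q μ →L[𝕜] Lp E p μ :=
  LinearMap.mkContinuous
    { toFun := fun f ↦ ((Lp.memLp f).mono_exponent hpq).toLp f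
      map_add' := fun f g ↦ by
        rw [← MemLp.toLp_add]
        exact MemLp.toLp_congr _ _ (Lp.coeFn_add f g)
      map_smul' := fun c f ↦ by
        rw [RingHom.id_apply, ← MemLp.toLp_const_smul]
        exact MemLp.toLp_congr _ _ (Lp.coeFn_smul c f) }
    _ (norm_toLp_le_of_exponent_le hpq)

theorem coeFn_inclusionOfExponentLE (hpq : p ≤ q) (f : Lp E q μ) :
    inclusionOfExponentLE 𝕜 E μ hpq f =ᵐ[μ] f :=
  MemLp.coeFn_toLp ((Lp.memLp f).mono_exponent hpq)

end MeasureTheory.Lp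

namespace ContinuousLinearMap

variable {α E F G : Type*} [MeasurableSpace α] {μ : Measure α}
  [NormedAddCommGroup E] [NormedSpace ℝ E] [NormedAddCommGroup F] [NormedSpace ℝ F]
  [NormedAddCommGroup G] [NormedSpace ℝ G]
  {p : ℝ≥0∞} (B : E →L[ℝ] F →L[ℝ] G)

theorem integrable_of_bilin_of_two_le [IsFiniteMeasure μ] (hp : 2 ≤ p) (X : Lp E p μ)
    (Y : Lp F p μ) : Integrable (fun t ↦ B (X t) (Y t)) μ :=
  memLp_one_iff_integrable.1 <|
    B.memLp_of_bilin 1 ((Lp.memLp X).mono_exponent hp) ((Lp.memLp Y).mono_exponent hp)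

variable (μ) in
noncomputable def lpPairingOfTwoLE [CompleteSpace G] [IsFiniteMeasure μ] [Fact (1 ≤ p)]
    (hp : 2 ≤ p) : Lp E p μ →L[ℝ] Lp F p μ →L[ℝ] G :=
  (B.lpPairing μ 2 2).bilinearComp (Lp.inclusionOfExponentLE ℝ E μ hp)
    (Lp.inclusionOfExponentLE ℝ F μ hp)

theorem lpPairingOfTwoLE_apply [CompleteSpace G] [IsFiniteMeasure μ] [Fact (1 ≤ p)]
    (hp : 2 ≤ p) (X : Lp E p μ) (Y : Lp F p μ) :
    B.lpPairingOfTwoLE μ hp X Y = ∫ t, B (X t) (Y t) ∂μ := by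
  rw [lpPairingOfTwoLE, bilinearComp_apply, lpPairing_eq_integral]
  refine integral_congr_ae ?_
  filter_upwards [Lp.coeFn_inclusionOfExponentLE (𝕜 := ℝ) hp X,
    Lp.coeFn_inclusionOfExponentLE (𝕜 := ℝ) hp Y] with t hXt hYt
  rw [hXt, hYt]

theorem integral_apply_indicatorConstLp (f : α → E) {s : Set α} (hs : MeasurableSet s)
    (hμs : μ s ≠ ∞) (v : F) :
    ∫ t, B (f t) (indicatorConstLp p hs hμs v t) ∂μ = ∫ t in s, B (f t) v ∂μ := by
  rw [← integral_indicator hs]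
  refine integral_congr_ae ?_
  filter_upwards [indicatorConstLp_coeFn (p := p) (hs := hs) (hμs := hμs) (c := v)] with t ht
  by_cases hts : t ∈ s <;> simp [ht, hts]

theorem lp_eq_zero_of_forall_integral_eq_zero [CompleteSpace G] [IsFiniteMeasure μ]
    [Fact (1 ≤ p)] (hB : ∀ u, (∀ v, B u v = 0) → u = 0) (X : Lp E p μ)
    (hX : ∀ Y : Lp F p μ, ∫ t, B (X t) (Y t) ∂μ = 0) : X = 0 := by
  have hBX : Integrable (fun t ↦ B (X t)) μ :=
    B.integrable_comp ((Lp.memLp X).integrable Fact.out)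
  have hset : ∀ s, MeasurableSet s → μ s < ∞ → ∫ t in s, B (X t) ∂μ = 0 := by
    intro s hs hμs
    ext v
    rw [integral_apply hBX.integrableOn, ← B.integral_apply_indicatorConstLp X hs hμs.ne, hX,
      zero_apply]
  refine Lp.eq_zero_iff_ae_eq_zero.2 ?_
  filter_upwards [hBX.ae_eq_zero_of_forall_setIntegral_eq_zero hset] with t ht
  exact hB _ fun v ↦ by simp [ht]

end ContinuousLinearMap

theorem loopPairingLp_weakly_nondegenerate_general (d : ℕ) (q : ℝ≥0∞)
    (hq2 : 2 ≤ q)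
    (ω₀ : EuclideanSpace ℝ (Fin d) →ₗ[ℝ] EuclideanSpace ℝ (Fin d) →ₗ[ℝ] ℝ)
    (halt : ∀ u v : EuclideanSpace ℝ (Fin d), ω₀ u v = - ω₀ v u)
    (hnd : ∀ u : EuclideanSpace ℝ (Fin d), (∀ v, ω₀ u v = 0) → u = 0) :
    (∀ X Y : Lp (EuclideanSpace ℝ (Fin d)) q (volume : Measure (AddCircle (1:ℝ))),
      Integrable (fun t => ω₀ (X t) (Y t))
        (volume : Measure (AddCircle (1:ℝ)))) ∧
    (∀ X X' Y : Lp (EuclideanSpace ℝ (Fin d)) q (volume : Measure (AddCircle (1:ℝ))),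
      loopPairingLp d q ω₀ (X + X') Y
        = loopPairingLp d q ω₀ X Y + loopPairingLp d q ω₀ X' Y) ∧
    (∀ (c : ℝ) (X Y : Lp (EuclideanSpace ℝ (Fin d)) q (volume : Measure (AddCircle (1:ℝ)))),
      loopPairingLp d q ω₀ (c • X) Y = c * loopPairingLp d q ω₀ X Y) ∧
    (∀ X Y Y' : Lp (EuclideanSpace ℝ (Fin d)) q (volume : Measure (AddCircle (1:ℝ))),
      loopPairingLp d q ω₀ X (Y + Y')
        = loopPairingLp d q ω₀ X Y + loopPairingLp d q ω₀ X Y') ∧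
    (∀ (c : ℝ) (X Y : Lp (EuclideanSpace ℝ (Fin d)) q (volume : Measure (AddCircle (1:ℝ)))),
      loopPairingLp d q ω₀ X (c • Y) = c * loopPairingLp d q ω₀ X Y) ∧
    (∀ X Y : Lp (EuclideanSpace ℝ (Fin d)) q (volume : Measure (AddCircle (1:ℝ))),
      loopPairingLp d q ω₀ X Y = - loopPairingLp d q ω₀ Y X) ∧
    (∃ C : ℝ, ∀ X Y : Lp (EuclideanSpace ℝ (Fin d)) q (volume : Measure (AddCircle (1:ℝ))),
      |loopPairingLp d q ω₀ X Y| ≤ C * ‖X‖ * ‖Y‖) ∧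
    (∀ X : Lp (EuclideanSpace ℝ (Fin d)) q (volume : Measure (AddCircle (1:ℝ))),
      (∀ Y, loopPairingLp d q ω₀ X Y = 0) → X = 0) := by
  have : Fact (1 ≤ q) := ⟨one_le_two.trans hq2⟩
  set B := ω₀.toContinuousBilinearMap
  set Ω := B.lpPairingOfTwoLE (volume : Measure (AddCircle (1:ℝ))) hq2
  have hΩ : ∀ X Y, loopPairingLp d q ω₀ X Y = Ω X Y := fun X Y ↦
    (B.lpPairingOfTwoLE_apply hq2 X Y).symm
  refine ⟨B.integrable_of_bilin_of_two_le hq2, ?_, ?_, ?_, ?_, ?_, ⟨‖Ω‖, fun X Y ↦ ?_⟩,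
    fun X ↦ B.lp_eq_zero_of_forall_integral_eq_zero hnd X⟩
  · intro X X' Y
    simp only [hΩ, map_add, add_apply]
  · intro c X Y
    simp only [hΩ, map_smul, smul_apply, smul_eq_mul]
  · intro X Y Y'
    simp only [hΩ, map_add]
  · intro c X Y
    simp only [hΩ, map_smul, smul_eq_mul]
  · intro X Y
    simp only [loopPairingLp, halt _ (Y _), integral_neg]
  · rw [hΩ, ← Real.norm_eq_abs]
    exact Ω.le_opNorm₂ X Y

/-- The loop-space pairing on `L^p` is a weakly nondegenerate form for
`2 ≤ p < ∞`.  For a nondegenerate alternating bilinear form `ω₀` on `ℝ^d` and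
`H = L^p(S¹, ℝ^d)` with `2 ≤ p < ∞`, the integrand `t ↦ ω₀(X t, Y t)` is integrable for
all `X, Y ∈ H`, `Ω(X,Y) = ∫ ω₀(X t, Y t) dt` is bilinear and continuous
(`|Ω(X,Y)| ≤ C‖X‖_p‖Y‖_p` for some `C` depending only on `ω₀`), alternating, and weakly
nondegenerate: `Ω(X,Y) = 0` for all `Y` implies `X = 0`. -/
theorem loopPairingLp_weakly_nondegenerate (d : ℕ) (q : ℝ≥0∞) [Fact (1 ≤ q)]
    (hq2 : 2 ≤ q) (hqtop : q ≠ ⊤)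
    (ω₀ : EuclideanSpace ℝ (Fin d) →ₗ[ℝ] EuclideanSpace ℝ (Fin d) →ₗ[ℝ] ℝ)
    (halt : ∀ u v : EuclideanSpace ℝ (Fin d), ω₀ u v = - ω₀ v u)
    (hnd : ∀ u : EuclideanSpace ℝ (Fin d), (∀ v, ω₀ u v = 0) → u = 0) :
    (∀ X Y : Lp (EuclideanSpace ℝ (Fin d)) q (volume : Measure (AddCircle (1:ℝ))),
      Integrable (fun t => ω₀ (X t) (Y t))
        (volume : Measure (AddCircle (1:ℝ)))) ∧
    (∀ X X' Y : Lp (EuclideanSpace ℝ (Fin d)) q (volume : Measure (AddCircle (1:ℝ))),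
      loopPairingLp d q ω₀ (X + X') Y
        = loopPairingLp d q ω₀ X Y + loopPairingLp d q ω₀ X' Y) ∧
    (∀ (c : ℝ) (X Y : Lp (EuclideanSpace ℝ (Fin d)) q (volume : Measure (AddCircle (1:ℝ)))),
      loopPairingLp d q ω₀ (c • X) Y = c * loopPairingLp d q ω₀ X Y) ∧
    (∀ X Y Y' : Lp (EuclideanSpace ℝ (Fin d)) q (volume : Measure (AddCircle (1:ℝ))),
      loopPairingLp d q ω₀ X (Y + Y')
        = loopPairingLp d q ω₀ X Y + loopPairingLp d q ω₀ X Y') ∧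
    (∀ (c : ℝ) (X Y : Lp (EuclideanSpace ℝ (Fin d)) q (volume : Measure (AddCircle (1:ℝ)))),
      loopPairingLp d q ω₀ X (c • Y) = c * loopPairingLp d q ω₀ X Y) ∧
    (∀ X Y : Lp (EuclideanSpace ℝ (Fin d)) q (volume : Measure (AddCircle (1:ℝ))),
      loopPairingLp d q ω₀ X Y = - loopPairingLp d q ω₀ Y X) ∧
    (∃ C : ℝ, ∀ X Y : Lp (EuclideanSpace ℝ (Fin d)) q (volume : Measure (AddCircle (1:ℝ))),
      |loopPairingLp d q ω₀ X Y| ≤ C * ‖X‖ * ‖Y‖) ∧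
    (∀ X : Lp (EuclideanSpace ℝ (Fin d)) q (volume : Measure (AddCircle (1:ℝ))),
      (∀ Y, loopPairingLp d q ω₀ X Y = 0) → X = 0) :=
  loopPairingLp_weakly_nondegenerate_general d q hq2 ω₀ halt hnd
end
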